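/- arXiv:0809.2130 — 3 statements merged into one kernel-verified Lean document; each statement's English description precedes it below -/
import Mathlib

section
/- Let G be a finite groupoid with object set G₀, and let a, b : G₀ → ℝ with a nowhere vanishing. Assume b/a is constant on orbits, i.e., λ(x) = b(x)/a(x) depends only on the orbit of x. Then ∑_{y ∈ G₀} b(y) / (∑_{g ∈ r⁻¹(y)} a(l(g))) = ∑_{O ∈ G₀/G} λ(O)/#(Aut(x_O)), where l(g) is the source of g and r⁻¹(y) the morphisms with target y. -/
/-!
The denominator at `y` counts each object `x` of the orbit of `y` with multiplicity
`#(x ⟶ y) = #Aut(y)`, so it equals `#Aut(O) · A(O)` with `A(O) = ∑_{x ∈ O} a(x)`.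
Since `b = λ(O) · a` on `O`, the terms of the left-hand side over `y ∈ O` add up to
`λ(O) · A(O) / (#Aut(O) · A(O)) = λ(O) / #Aut(O)`.
-/

open CategoryTheory Finset

lemma Finset.sum_div_mul_sum_of_eq_mul {ι K : Type*} [Field K] {s : Finset ι} {a b : ι → K}
    (l c : K) (hb : ∀ y ∈ s, b y = l * a y) (hs : ∑ x ∈ s, a x ≠ 0) :
    ∑ y ∈ s, b y / (c * ∑ x ∈ s, a x) = l / c := by
  rw [← sum_div, sum_congr rfl hb, ← mul_sum, mul_div_mul_right _ _ hs]

lemma tsum_sigma_fst_eq_sum_card_nsmul {ι M : Type*} [Fintype ι] {β : ι → Type*}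
    [∀ i, Finite (β i)] [AddCommMonoid M] [TopologicalSpace M] (f : ι → M) :
    ∑' g : (Σ i, β i), f g.1 = ∑ i, Nat.card (β i) • f i := by
  have := fun i => Fintype.ofFinite (β i)
  simp only [tsum_fintype, Fintype.sum_sigma, sum_const, card_univ, Nat.card_eq_fintype_card]

namespace CategoryTheory.Groupoid

variable {C : Type*} [Groupoid C]

lemma card_aut_eq_of_iso {x y : C} (i : x ≅ y) : Nat.card (Aut x) = Nat.card (Aut y) :=
  Nat.card_congr (Aut.autMulEquivOfIso i).toEquiv

lemma card_hom_eq_card_aut_of_iso {x y : C} (i : x ≅ y) :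
    Nat.card (x ⟶ y) = Nat.card (Aut y) :=
  Nat.card_congr ((i.homCongr (Iso.refl y)).trans (isoEquivHom y y).symm)

lemma card_hom_eq_zero_of_not_iso {x y : C} (h : ¬ Nonempty (x ≅ y)) :
    Nat.card (x ⟶ y) = 0 :=
  @Nat.card_of_isEmpty _ ⟨fun g => h ⟨asIso g⟩⟩

end CategoryTheory.Groupoid

section

variable {C : Type*} [Groupoid C] [Fintype C]

open Classical in
noncomputable def orbitWeight (a : C → ℝ) (O : Quotient (isIsomorphicSetoid C)) : ℝ :=
  ∑ x with Quotient.mk (isIsomorphicSetoid C) x = O, a x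

open Groupoid in
lemma tsum_sigma_hom_eq_card_aut_mul_orbitWeight [∀ x y : C, Finite (x ⟶ y)] (a : C → ℝ)
    (y : C) :
    ∑' g : (Σ x : C, x ⟶ y), a g.1 =
      Nat.card (Aut y) * orbitWeight a (Quotient.mk (isIsomorphicSetoid C) y) := by
  rw [tsum_sigma_fst_eq_sum_card_nsmul, orbitWeight, mul_sum, sum_filter]
  refine sum_congr rfl fun x _ => ?_
  split_ifs with hxy
  · rw [card_hom_eq_card_aut_of_iso (Quotient.exact hxy).some, nsmul_eq_mul]
  · rw [card_hom_eq_zero_of_not_iso (mt (Quotient.sound (s := isIsomorphicSetoid C)) hxy),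
      zero_smul]

end

open Groupoid in
/-- Let `G` be a finite groupoid with objects `G₀` and `a b : G₀ → ℝ` with `a` nowhere
vanishing, such that `λ = b/a` is constant on orbits.  Then the weighted volume
`∑_{y} b(y) / (∑_{g ∈ r⁻¹(y)} a(l(g)))` equals `∑_{orbits O} λ(O) / #(Aut x_O)`. -/
theorem weighted_volume_eq_orbit_sum
    (C : Type*) [Groupoid C] [Finite C] [∀ x y : C, Finite (x ⟶ y)]
    (a b : C → ℝ) (ha : ∀ x, a x ≠ 0)
    (hinv : ∀ x y : C, Nonempty (x ≅ y) → b x / a x = b y / a y)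
    (hden : ∀ y : C, ∑' g : (Σ x : C, x ⟶ y), a g.1 ≠ 0) :
    ∑' y : C, b y / (∑' g : (Σ x : C, x ⟶ y), a g.1) =
      ∑' O : Quotient (isIsomorphicSetoid C),
        (b (Quotient.out O) / a (Quotient.out O)) / Nat.card (Aut (Quotient.out O)) := by
  classical
  have := Fintype.ofFinite C
  have := Fintype.ofFinite (Quotient (isIsomorphicSetoid C))
  simp only [tsum_fintype, tsum_sigma_hom_eq_card_aut_mul_orbitWeight]
  rw [← sum_fiberwise univ (Quotient.mk (isIsomorphicSetoid C))]
  refine sum_congr rfl fun O _ => ?_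
  have hO : orbitWeight a O ≠ 0 := by
    have := hden O.out
    rw [tsum_sigma_hom_eq_card_aut_mul_orbitWeight, Quotient.out_eq] at this
    exact right_ne_zero_of_mul this
  have hiso : ∀ y ∈ univ.filter (Quotient.mk (isIsomorphicSetoid C) · = O), O.out ≅ y :=
    fun y hy => (Quotient.exact ((Quotient.out_eq O).trans (mem_filter.1 hy).2.symm)).some
  have hb : ∀ y ∈ univ.filter (Quotient.mk (isIsomorphicSetoid C) · = O),
      b y = b O.out / a O.out * a y := fun y hy => by
    rw [hinv _ _ ⟨hiso y hy⟩, div_mul_cancel₀ _ (ha y)]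
  calc _ = ∑ y with Quotient.mk (isIsomorphicSetoid C) y = O,
        b y / (Nat.card (Aut O.out) * orbitWeight a O) := by
        refine sum_congr rfl fun y hy => ?_
        rw [(mem_filter.1 hy).2, card_aut_eq_of_iso (hiso y hy)]
    _ = _ := sum_div_mul_sum_of_eq_mul _ _ hb hO
end

section
/- The groupoid cardinality is invariant under equivalence: if finite groupoids G and G' are equivalent categories, then ∑_{O ∈ G₀/G} 1/#(Aut_G(x_O)) = ∑_{O' ∈ G₀'/G'} 1/#(Aut_{G'}(x'_{O'})). -/
/-!
An equivalence `F` induces a bijection on isomorphism classes, and since `F` is fully faithful it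
induces isomorphisms `Aut X ≃* Aut (F X)`. Because isomorphic objects have isomorphic automorphism
groups, `#Aut` is a function of the isomorphism class alone, so the two sums defining the groupoid
cardinalities agree term by term after reindexing along the bijection.
-/

open CategoryTheory

noncomputable def groupoidCard (C : Type*) [Groupoid C] : ℝ :=
  ∑' O : Quotient (isIsomorphicSetoid C), (1 : ℝ) / Nat.card (Aut (Quotient.out O))

namespace CategoryTheory

abbrev IsoClasses (C : Type*) [Category C] : Type _ := _root_.Quotient (isIsomorphicSetoid C)

variable {C D : Type*} [Category C] [Category D]

lemma Aut.card_eq_of_iso {X Y : C} (i : X ≅ Y) : Nat.card (Aut X) = Nat.card (Aut Y) :=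
  Nat.card_congr (Aut.autMulEquivOfIso i).toEquiv

noncomputable def IsoClasses.autCard : IsoClasses C → ℕ :=
  _root_.Quotient.lift (fun X => Nat.card (Aut X)) fun _ _ ⟨i⟩ => Aut.card_eq_of_iso i

lemma IsoClasses.autCard_eq_card_aut_out (O : IsoClasses C) :
    O.autCard = Nat.card (Aut O.out) := by
  conv_lhs => rw [← O.out_eq]
  rfl

def Equivalence.isoClassesEquiv (e : C ≌ D) : IsoClasses C ≃ IsoClasses D where
  toFun := _root_.Quotient.map e.functor.obj fun _ _ ⟨i⟩ => ⟨e.functor.mapIso i⟩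
  invFun := _root_.Quotient.map e.inverse.obj fun _ _ ⟨i⟩ => ⟨e.inverse.mapIso i⟩
  left_inv O := O.inductionOn fun X => _root_.Quotient.sound ⟨e.unitIso.symm.app X⟩
  right_inv O := O.inductionOn fun Y => _root_.Quotient.sound ⟨e.counitIso.app Y⟩

lemma Equivalence.card_aut_functor_obj (e : C ≌ D) (X : C) :
    Nat.card (Aut (e.functor.obj X)) = Nat.card (Aut X) :=
  Nat.card_congr (e.fullyFaithfulFunctor.autMulEquivOfFullyFaithful X).toEquiv.symm

lemma Equivalence.autCard_isoClassesEquiv (e : C ≌ D) (O : IsoClasses C) :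
    (e.isoClassesEquiv O).autCard = O.autCard :=
  O.inductionOn e.card_aut_functor_obj

end CategoryTheory

lemma groupoidCard_eq_tsum_autCard (C : Type*) [Groupoid C] :
    groupoidCard C = ∑' O : IsoClasses C, (1 : ℝ) / O.autCard := by
  simp only [groupoidCard, IsoClasses.autCard_eq_card_aut_out]

/-- Groupoid cardinality is invariant under equivalence of (finite) groupoids. -/
theorem groupoidCard_eq_of_equivalence
    (C D : Type*) [Groupoid C] [Groupoid D] [Finite C] [Finite D]
    [∀ x y : C, Finite (x ⟶ y)] [∀ x y : D, Finite (x ⟶ y)]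
    (F : C ≌ D) : groupoidCard C = groupoidCard D := by
  rw [groupoidCard_eq_tsum_autCard, groupoidCard_eq_tsum_autCard,
    ← F.isoClassesEquiv.tsum_eq]
  simp only [F.autCard_isoClassesEquiv]
end

section
/- Let G be a finite groupoid with objects G₀, and let a, b : G₀ → ℝ with a nowhere zero such that λ = b/a is constant on orbits. Let G' be an equivalent finite groupoid with objects G₀' and let a', b' : G₀' → ℝ with a' nowhere zero, λ' = b'/a' the corresponding invariant function under the equivalence. Then ∑_{y∈G₀} b(y)/(∑_{g∈r⁻¹(y)} a(l(g))) = ∑_{y'∈G₀'} b'(y')/(∑_{g'∈r'⁻¹(y')} a'(l'(g'))), assuming all denominators are nonzero. -/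
/-!
In a groupoid `#Hom(x, y)` is `#Aut(y)` when `x ≅ y` and `0` otherwise, so the denominator at `y`
is `#Aut(y) · A(O)`, where `A(O)` is the total weight `a` of the orbit `O` of `y`. Writing
`b = λ a`, the orbit `O` therefore contributes `λ(O) / #Aut(O) · ∑_{y ∈ O} a(y) / A(O) =
λ(O) / #Aut(O)`. An equivalence of groupoids identifies the orbits (the objects of the skeletons)
and their automorphism groups, and `λ'` corresponds to `λ` by hypothesis.
-/

open CategoryTheory Finset

theorem Finset.sum_comp_mul_div_sum_fiberwise {ι κ K : Type*} [Fintype ι] [Fintype κ]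
    [DecidableEq κ] [Field K] (π : ι → κ) (f : κ → K) (w : ι → K)
    (hw : ∀ k, ∑ i with π i = k, w i ≠ 0) :
    ∑ i, f (π i) * w i / ∑ j with π j = π i, w j = ∑ k, f k := by
  rw [← sum_fiberwise univ π]
  refine sum_congr rfl fun k _ => ?_
  calc ∑ i with π i = k, f (π i) * w i / ∑ j with π j = π i, w j
      = ∑ i with π i = k, f k * w i / ∑ j with π j = k, w j :=
        sum_congr rfl fun i hi => by rw [(mem_filter.1 hi).2]
    _ = f k := by rw [← sum_div, ← mul_sum, mul_div_assoc, div_self (hw k), mul_one]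

namespace CategoryTheory

instance Skeleton.finite (C : Type*) [Category C] [Finite C] : Finite (Skeleton C) :=
  Finite.of_surjective toSkeleton fun q => ⟨_, toSkeleton_fromSkeleton_obj q⟩

theorem Iso.natCard_end_eq {C : Type*} [Category C] {x y : C} (e : x ≅ y) :
    Nat.card (x ⟶ x) = Nat.card (y ⟶ y) :=
  Nat.card_congr (e.homCongr e)

theorem Equivalence.sum_skeleton_eq {C D M : Type*} [Category C] [Category D] [AddCommMonoid M]
    [Fintype (Skeleton C)] [Fintype (Skeleton D)] (e : C ≌ D) (μ : C → M) (μ' : D → M)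
    (hμ' : ∀ x y, Nonempty (x ≅ y) → μ' x = μ' y) (hcorr : ∀ x, μ' (e.functor.obj x) = μ x) :
    ∑ q : Skeleton C, μ ((fromSkeleton C).obj q) = ∑ q : Skeleton D, μ' ((fromSkeleton D).obj q) :=
  Fintype.sum_equiv e.skeletonEquiv _ _ fun q => by
    rw [← hcorr]
    -- `e.skeletonEquiv q` is by definition the class of `e.functor.obj ((fromSkeleton C).obj q)`.
    exact hμ' _ _ (toSkeleton_eq_iff.1 rfl)

namespace Groupoid

variable {C : Type*} [Groupoid C]

theorem isEmpty_hom_of_toSkeleton_ne {x y : C} (h : toSkeleton x ≠ toSkeleton y) :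
    IsEmpty (x ⟶ y) :=
  ⟨fun g => h (congr_toSkeleton_of_iso (asIso g))⟩

variable [Fintype C] [∀ x y : C, Fintype (x ⟶ y)]

theorem sum_sigma_hom_eq_card_end_mul {K : Type*} [Semiring K] [DecidableEq (Skeleton C)]
    (a : C → K) (y : C) :
    ∑ g : Σ x, x ⟶ y, a g.1 = Nat.card (y ⟶ y) * ∑ x with toSkeleton x = toSkeleton y, a x := by
  rw [Fintype.sum_sigma, mul_sum, sum_filter]
  refine sum_congr rfl fun x _ => ?_
  simp only [sum_const, card_univ, ← Nat.card_eq_fintype_card, nsmul_eq_mul]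
  split_ifs with h
  · rw [Nat.card_congr ((Skeleton.isoOfEq h).homCongr (Iso.refl y))]
  · have := isEmpty_hom_of_toSkeleton_ne h
    simp

theorem sum_div_sum_sigma_hom_eq_sum_skeleton [Fintype (Skeleton C)] {K : Type*} [Field K]
    (a b : C → K) (ha : ∀ x, a x ≠ 0)
    (hinv : ∀ x y : C, Nonempty (x ≅ y) → b x / a x = b y / a y)
    (hden : ∀ y : C, ∑ g : Σ x, x ⟶ y, a g.1 ≠ 0) :
    ∑ y, b y / ∑ g : Σ x, x ⟶ y, a g.1 =
      ∑ q : Skeleton C, b ((fromSkeleton C).obj q) / a ((fromSkeleton C).obj q) /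
        Nat.card ((fromSkeleton C).obj q ⟶ (fromSkeleton C).obj q) := by
  classical
  set μ : C → K := fun x => b x / a x / Nat.card (x ⟶ x)
  have hμ (y : C) : μ ((fromSkeleton C).obj (toSkeleton y)) = μ y := by
    have e := fromSkeletonToSkeletonIso y
    simp only [μ, hinv _ _ ⟨e⟩, e.natCard_end_eq]
  have hterm (y : C) : b y / ∑ g : Σ x, x ⟶ y, a g.1 =
      μ ((fromSkeleton C).obj (toSkeleton y)) * a y / ∑ x with toSkeleton x = toSkeleton y, a x := by
    rw [hμ, sum_sigma_hom_eq_card_end_mul, ← div_mul_cancel₀ (b y) (ha y)]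
    ring
  rw [sum_congr rfl fun y _ => hterm y]
  refine sum_comp_mul_div_sum_fiberwise toSkeleton (fun q => μ ((fromSkeleton C).obj q)) a
    fun q => ?_
  have := hden ((fromSkeleton C).obj q)
  rw [sum_sigma_hom_eq_card_end_mul, toSkeleton_fromSkeleton_obj] at this
  exact right_ne_zero_of_mul this

end Groupoid

end CategoryTheory

/-- Morita invariance of the weighted groupoid volume:  Let `G`, `G'` be equivalent
finite groupoids and `a, b` (resp. `a', b'`) real functions on the objects with `a`,
`a'` nowhere zero, such that `λ = b/a` and `λ' = b'/a'` are invariant (constant on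
orbits) and correspond under the equivalence.  Then
`∑_y b(y)/(∑_{g∈r⁻¹(y)} a(l(g))) = ∑_{y'} b'(y')/(∑_{g'∈r'⁻¹(y')} a'(l'(g')))`. -/
theorem weighted_volume_morita_invariant
    (C D : Type*) [Groupoid C] [Groupoid D] [Finite C] [Finite D]
    [∀ x y : C, Finite (x ⟶ y)] [∀ x y : D, Finite (x ⟶ y)]
    (F : C ≌ D)
    (a b : C → ℝ) (a' b' : D → ℝ)
    (ha : ∀ x, a x ≠ 0) (ha' : ∀ y, a' y ≠ 0)
    (hinv : ∀ x y : C, Nonempty (x ≅ y) → b x / a x = b y / a y)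
    (hinv' : ∀ x y : D, Nonempty (x ≅ y) → b' x / a' x = b' y / a' y)
    (hcorr : ∀ x : C, b' (F.functor.obj x) / a' (F.functor.obj x) = b x / a x)
    (hden : ∀ y : C, ∑' g : (Σ x : C, x ⟶ y), a g.1 ≠ 0)
    (hden' : ∀ y : D, ∑' g : (Σ x : D, x ⟶ y), a' g.1 ≠ 0) :
    ∑' y : C, b y / (∑' g : (Σ x : C, x ⟶ y), a g.1) =
      ∑' y : D, b' y / (∑' g : (Σ x : D, x ⟶ y), a' g.1) := by
  have := Fintype.ofFinite C
  have := Fintype.ofFinite D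
  have := Fintype.ofFinite (Skeleton C)
  have := Fintype.ofFinite (Skeleton D)
  have (x y : C) : Fintype (x ⟶ y) := Fintype.ofFinite _
  have (x y : D) : Fintype (x ⟶ y) := Fintype.ofFinite _
  simp only [tsum_fintype] at hden hden' ⊢
  rw [Groupoid.sum_div_sum_sigma_hom_eq_sum_skeleton a b ha hinv hden,
    Groupoid.sum_div_sum_sigma_hom_eq_sum_skeleton a' b' ha' hinv' hden']
  refine F.sum_skeleton_eq (fun x => b x / a x / Nat.card (x ⟶ x))
    (fun y => b' y / a' y / Nat.card (y ⟶ y)) (fun x y ⟨e⟩ => ?_) fun x => ?_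
  · rw [hinv' x y ⟨e⟩, e.natCard_end_eq]
  · rw [hcorr, ← Nat.card_congr F.fullyFaithfulFunctor.homEquiv]
end
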